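/- arXiv:1705.05135 — 3 statements merged into one kernel-verified Lean document; each statement's English description precedes it below -/
import Mathlib

section
/- The capacitary inequality: for any function f vanishing on B, ∫₀^∞ 2t · cap(A_t, B) dt ≤ 4 E(f), where A_t = {x : |f(x)| > t} is the super level-set of f. -/
open MeasureTheory
open scoped ENNReal

/-- The Dirichlet form `E(f) = (1/2) ∑_{x,y} μ(x) p(x,y) (f(x) − f(y))²`. -/
noncomputable def dirichletForm {S : Type*} (μ : S → ℝ) (p : S → S → ℝ) (f : S → ℝ) : ℝ≥0∞ :=
  (1/2 : ℝ≥0∞) * ∑' q : S × S, ENNReal.ofReal (μ q.1 * p q.1 q.2 * (f q.1 - f q.2) ^ 2)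

/-- The capacity `cap(A,B) = inf{E(f) : f|_A = 1, f|_B = 0, 0 ≤ f ≤ 1}`. -/
noncomputable def capacity {S : Type*} (μ : S → ℝ) (p : S → S → ℝ) (A B : Set S) : ℝ≥0∞ :=
  ⨅ f : {f : S → ℝ // (∀ x ∈ A, f x = 1) ∧ (∀ x ∈ B, f x = 0) ∧ ∀ x, 0 ≤ f x ∧ f x ≤ 1},
    dirichletForm μ p f.1

/-!
For `t > 0` the profile `x ↦ min 1 (f x ^ 2 / t ^ 2)` is admissible for `cap(A_t, B)`. By Tonelli
the `2t dt`-integral of its Dirichlet form splits into one integral per pair `(x, y)`, so everything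
reduces to the one-variable inequality
`∫₀^∞ 2t (min 1 (a²/t²) - min 1 (b²/t²))² dt ≤ 4 (a - b)²`.
For `0 ≤ b ≤ a` the part over `t > a` is computed exactly, and on `(0, a]` one factor
`2t (1 - b²/t²)` is bounded by its value `2(a² - b²)/a` at `t = a`. The square in the profile
matters: with `min 1 (|f x| / t)` the integral over large `t` would diverge.
-/

open Set ENNReal

lemma min_one_sq_div_sq_eq_one {c t : ℝ} (ht : 0 < t) (h : t ≤ |c|) :
    min 1 (c ^ 2 / t ^ 2) = 1 :=
  min_eq_left <| (one_le_div (by positivity)).2 <| sq_le_sq.2 <| by rwa [abs_of_pos ht]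

lemma min_one_sq_div_sq_eq_div {c t : ℝ} (ht : 0 < t) (h : |c| ≤ t) :
    min 1 (c ^ 2 / t ^ 2) = c ^ 2 / t ^ 2 :=
  min_eq_right <| (div_le_one (by positivity)).2 <| sq_le_sq.2 <| by rwa [abs_of_pos ht]

lemma two_mul_one_sub_min_one_sq_div_sq_le {a b t : ℝ} (hb : 0 ≤ b) (hba : b ≤ a)
    (ht : 0 < t) (hta : t ≤ a) :
    2 * t * (1 - min 1 (b ^ 2 / t ^ 2)) ≤ 2 * (a ^ 2 - b ^ 2) / a := by
  have ha : 0 < a := ht.trans_le hta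
  rcases le_total t b with htb | hbt
  · rw [min_one_sq_div_sq_eq_one ht (by rwa [abs_of_nonneg hb]), sub_self, mul_zero]
    exact div_nonneg (by nlinarith) ha.le
  · rw [min_one_sq_div_sq_eq_div ht (by rwa [abs_of_nonneg hb]),
      show 2 * t * (1 - b ^ 2 / t ^ 2) = 2 * (t ^ 2 - b ^ 2) / t by field_simp,
      div_le_div_iff₀ ht ha]
    nlinarith [mul_nonneg (sub_nonneg.2 hta) (add_nonneg (mul_nonneg ht.le ha.le) (sq_nonneg b))]

lemma integral_one_sub_sq_div_sq {a b : ℝ} (hb : 0 < b) (hba : b ≤ a) :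
    ∫ t in b..a, (1 - b ^ 2 / t ^ 2) = (a - b) ^ 2 / a := by
  have hpos : ∀ t ∈ uIcc b a, t ≠ 0 := fun t ht =>
    (hb.trans_le (by rw [uIcc_of_le hba] at ht; exact ht.1)).ne'
  have hderiv : ∀ t ∈ uIcc b a, HasDerivAt (fun s => s + b ^ 2 / s) (1 - b ^ 2 / t ^ 2) t :=
    fun t ht => ((hasDerivAt_id' t).add ((hasDerivAt_const t (b ^ 2)).div (hasDerivAt_id' t)
      (hpos t ht))).congr_deriv (by ring)
  have ha : a ≠ 0 := (hb.trans_le hba).ne'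
  rw [intervalIntegral.integral_eq_sub_of_hasDerivAt hderiv]
  · field_simp
    ring
  · exact (continuousOn_const.sub (continuousOn_const.div (continuousOn_pow 2)
      fun t ht => pow_ne_zero 2 (hpos t ht))).intervalIntegrable

lemma lintegral_Ioc_one_sub_min_one_sq_div_sq {a b : ℝ} (hb : 0 ≤ b) (hba : b ≤ a) :
    ∫⁻ t in Ioc 0 a, ENNReal.ofReal (1 - min 1 (b ^ 2 / t ^ 2))
      = ENNReal.ofReal ((a - b) ^ 2 / a) := by
  rcases hb.eq_or_lt with rfl | hb
  · simp [Real.volume_Ioc, sq]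
  have below : ∫⁻ t in Ioc 0 b, ENNReal.ofReal (1 - min 1 (b ^ 2 / t ^ 2)) = 0 := by
    refine (setLIntegral_congr_fun measurableSet_Ioc fun t ht => ?_).trans lintegral_zero
    rw [min_one_sq_div_sq_eq_one ht.1 (by rw [abs_of_pos hb]; exact ht.2), sub_self, ofReal_zero]
  have hcont : ContinuousOn (fun t => 1 - b ^ 2 / t ^ 2) (Icc b a) :=
    continuousOn_const.sub <| continuousOn_const.div (continuousOn_pow 2) fun t ht =>
      pow_ne_zero 2 (hb.trans_le ht.1).ne'
  have above : ∫⁻ t in Ioc b a, ENNReal.ofReal (1 - min 1 (b ^ 2 / t ^ 2))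
      = ENNReal.ofReal (∫ t in b..a, (1 - b ^ 2 / t ^ 2)) := by
    rw [intervalIntegral.integral_of_le hba, ofReal_integral_eq_lintegral_ofReal
      (hcont.integrableOn_Icc.mono_set Ioc_subset_Icc_self)]
    · refine setLIntegral_congr_fun measurableSet_Ioc fun t ht => ?_
      rw [min_one_sq_div_sq_eq_div (hb.trans ht.1) (by rw [abs_of_pos hb]; exact ht.1.le)]
    · refine (ae_restrict_iff' measurableSet_Ioc).2 (.of_forall fun t ht => ?_)
      exact sub_nonneg.2 <| (div_le_one (pow_pos (hb.trans ht.1) 2)).2 <|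
        pow_le_pow_left₀ hb.le ht.1.le 2
  rw [← Ioc_union_Ioc_eq_Ioc hb.le hba,
    lintegral_union measurableSet_Ioc (Ioc_disjoint_Ioc_of_le le_rfl), below, above, zero_add,
    integral_one_sub_sq_div_sq hb hba]

lemma lintegral_Ioi_two_mul_sq_sub_min_one_sq_div_sq {a b : ℝ} (hb : 0 ≤ b) (hba : b ≤ a)
    (ha : 0 < a) :
    ∫⁻ t in Ioi a, ENNReal.ofReal (2 * t * (min 1 (a ^ 2 / t ^ 2) - min 1 (b ^ 2 / t ^ 2)) ^ 2)
      = ENNReal.ofReal ((a ^ 2 - b ^ 2) ^ 2 / a ^ 2) := by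
  have hint : IntegrableOn (fun t : ℝ => 2 * (a ^ 2 - b ^ 2) ^ 2 * t ^ (-3 : ℝ)) (Ioi a) :=
    (integrableOn_Ioi_rpow_of_lt (by norm_num) ha).const_mul _
  have hnonneg :
      0 ≤ᵐ[volume.restrict (Ioi a)] fun t : ℝ => 2 * (a ^ 2 - b ^ 2) ^ 2 * t ^ (-3 : ℝ) :=
    (ae_restrict_iff' measurableSet_Ioi).2 (.of_forall fun t ht => by
      have : 0 < t := ha.trans ht
      positivity)
  rw [setLIntegral_congr_fun measurableSet_Ioi (g := fun t => ENNReal.ofReal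
      (2 * (a ^ 2 - b ^ 2) ^ 2 * t ^ (-3 : ℝ))) fun t ht => ?_,
    ← ofReal_integral_eq_lintegral_ofReal hint hnonneg, integral_const_mul,
    integral_Ioi_rpow_of_lt (by norm_num) ha]
  · congr 1
    rw [show (-3 + 1 : ℝ) = -(2 : ℕ) by norm_num, Real.rpow_neg ha.le, Real.rpow_natCast]
    field_simp
    ring
  · have ht0 : 0 < t := ha.trans ht
    dsimp only
    rw [min_one_sq_div_sq_eq_div ht0 (by rw [abs_of_pos ha]; exact le_of_lt ht),
      min_one_sq_div_sq_eq_div ht0 (by rw [abs_of_nonneg hb]; exact hba.trans (le_of_lt ht)),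
      show (-3 : ℝ) = -(3 : ℕ) by norm_num, Real.rpow_neg ht0.le, Real.rpow_natCast]
    congr 1
    field_simp

lemma lintegral_Ioc_two_mul_sq_sub_min_one_sq_div_sq_le {a b : ℝ} (hb : 0 ≤ b) (hba : b ≤ a)
    (ha : 0 < a) :
    ∫⁻ t in Ioc 0 a, ENNReal.ofReal (2 * t * (min 1 (a ^ 2 / t ^ 2) - min 1 (b ^ 2 / t ^ 2)) ^ 2)
      ≤ ENNReal.ofReal (2 * (a ^ 2 - b ^ 2) / a * ((a - b) ^ 2 / a)) := by
  have hK : 0 ≤ 2 * (a ^ 2 - b ^ 2) / a := div_nonneg (by nlinarith) ha.le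
  calc _ ≤ ∫⁻ t in Ioc 0 a,
        ENNReal.ofReal (2 * (a ^ 2 - b ^ 2) / a) * ENNReal.ofReal (1 - min 1 (b ^ 2 / t ^ 2)) :=
        setLIntegral_mono' measurableSet_Ioc fun t ht => by
          rw [← ofReal_mul hK, min_one_sq_div_sq_eq_one ht.1 (by rw [abs_of_pos ha]; exact ht.2),
            sq, ← mul_assoc]
          exact ofReal_le_ofReal <| mul_le_mul_of_nonneg_right
            (two_mul_one_sub_min_one_sq_div_sq_le hb hba ht.1 ht.2)
            (sub_nonneg.2 (min_le_left _ _))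
    _ = _ := by
      rw [lintegral_const_mul' _ _ ofReal_ne_top, lintegral_Ioc_one_sub_min_one_sq_div_sq hb hba,
        ← ofReal_mul hK]

lemma lintegral_two_mul_sq_sub_min_one_sq_div_sq_le_of_le {a b : ℝ} (hb : 0 ≤ b) (hba : b ≤ a) :
    ∫⁻ t in Ioi 0, ENNReal.ofReal (2 * t * (min 1 (a ^ 2 / t ^ 2) - min 1 (b ^ 2 / t ^ 2)) ^ 2)
      ≤ ENNReal.ofReal (4 * (a - b) ^ 2) := by
  rcases (hb.trans hba).eq_or_lt with ha | ha
  · obtain rfl : b = 0 := le_antisymm (ha ▸ hba) hb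
    simp [← ha]
  rw [← Ioc_union_Ioi_eq_Ioi ha.le, lintegral_union measurableSet_Ioi Ioc_disjoint_Ioi_same,
    lintegral_Ioi_two_mul_sq_sub_min_one_sq_div_sq hb hba ha]
  grw [lintegral_Ioc_two_mul_sq_sub_min_one_sq_div_sq_le hb hba ha,
    ← ofReal_add (mul_nonneg (div_nonneg (by nlinarith) ha.le) (by positivity)) (by positivity)]
  -- the two pieces add up to `4 (a - b) ^ 2 - (a - b) ^ 4 / a ^ 2`
  refine ofReal_le_ofReal ?_
  rw [div_mul_div_comm, ← sq, ← add_div, div_le_iff₀ (by positivity)]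
  nlinarith [sq_nonneg ((a - b) ^ 2)]

theorem lintegral_ofReal_two_mul_mul_sq_sub_min_one_sq_div_sq_le (a b : ℝ) :
    ∫⁻ t in Ioi 0, ENNReal.ofReal (2 * t) *
        ENNReal.ofReal ((min 1 (a ^ 2 / t ^ 2) - min 1 (b ^ 2 / t ^ 2)) ^ 2)
      ≤ 4 * ENNReal.ofReal ((a - b) ^ 2) := by
  simp_rw [← ofReal_mul' (sq_nonneg _)]
  rw [show (4 : ℝ≥0∞) = ENNReal.ofReal 4 by norm_num, ← ofReal_mul (by norm_num)]
  wlog h : |b| ≤ |a| generalizing a b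
  · simpa only [sub_sq_comm] using this b a (le_of_not_ge h)
  calc _ = ∫⁻ t in Ioi 0,
        ENNReal.ofReal (2 * t * (min 1 (|a| ^ 2 / t ^ 2) - min 1 (|b| ^ 2 / t ^ 2)) ^ 2) := by
        simp only [sq_abs]
    _ ≤ ENNReal.ofReal (4 * (|a| - |b|) ^ 2) :=
        lintegral_two_mul_sq_sub_min_one_sq_div_sq_le_of_le (abs_nonneg b) h
    _ ≤ ENNReal.ofReal (4 * (a - b) ^ 2) := ofReal_le_ofReal <| mul_le_mul_of_nonneg_left
        (sq_le_sq.2 (by simpa using abs_abs_sub_abs_le_abs_sub a b)) (by norm_num)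

section DirichletForm

variable {S : Type*} {μ : S → ℝ} {p : S → S → ℝ}

lemma dirichletForm_eq_tsum (hμ : ∀ x, 0 ≤ μ x) (hp : ∀ x y, 0 ≤ p x y) (f : S → ℝ) :
    dirichletForm μ p f = 1 / 2 * ∑' q : S × S,
      ENNReal.ofReal (μ q.1 * p q.1 q.2) * ENNReal.ofReal ((f q.1 - f q.2) ^ 2) := by
  simp_rw [dirichletForm, ← ofReal_mul (mul_nonneg (hμ _) (hp _ _))]

lemma capacity_le_dirichletForm {A B : Set S} {g : S → ℝ} (hA : ∀ x ∈ A, g x = 1)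
    (hB : ∀ x ∈ B, g x = 0) (hg : ∀ x, 0 ≤ g x ∧ g x ≤ 1) :
    capacity μ p A B ≤ dirichletForm μ p g :=
  iInf_le_of_le ⟨g, hA, hB, hg⟩ le_rfl

theorem lintegral_mul_dirichletForm_le [Countable S] (hμ : ∀ x, 0 ≤ μ x)
    (hp : ∀ x y, 0 ≤ p x y) {α : Type*} [MeasurableSpace α] {ν : Measure α} {w : α → ℝ≥0∞}
    (hw : Measurable w) {g : α → S → ℝ} (hg : ∀ x, Measurable fun t => g t x) (f : S → ℝ)
    (C : ℝ≥0∞)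
    (hC : ∀ x y, ∫⁻ t, w t * ENNReal.ofReal ((g t x - g t y) ^ 2) ∂ν
      ≤ C * ENNReal.ofReal ((f x - f y) ^ 2)) :
    ∫⁻ t, w t * dirichletForm μ p (g t) ∂ν ≤ C * dirichletForm μ p f := by
  calc ∫⁻ t, w t * dirichletForm μ p (g t) ∂ν
      = 1 / 2 * ∑' q : S × S, ENNReal.ofReal (μ q.1 * p q.1 q.2) *
          ∫⁻ t, w t * ENNReal.ofReal ((g t q.1 - g t q.2) ^ 2) ∂ν := by
        simp_rw [dirichletForm_eq_tsum hμ hp, ← ENNReal.tsum_mul_left, mul_left_comm (w _)]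
        rw [lintegral_tsum fun q => by fun_prop]
        congr 1 with q
        rw [lintegral_const_mul' _ _ (by norm_num), lintegral_const_mul' _ _ ofReal_ne_top]
    _ ≤ 1 / 2 * ∑' q : S × S, ENNReal.ofReal (μ q.1 * p q.1 q.2) *
          (C * ENNReal.ofReal ((f q.1 - f q.2) ^ 2)) := by
        gcongr with q
        exact hC q.1 q.2
    _ = C * dirichletForm μ p f := by
        simp_rw [dirichletForm_eq_tsum hμ hp f, mul_left_comm _ C, ENNReal.tsum_mul_left]
        ring

end DirichletForm

theorem capacitary_inequality_general {S : Type*} [Countable S]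
    (μ : S → ℝ) (p : S → S → ℝ)
    (hμ : ∀ x, 0 ≤ μ x)
    (hp : ∀ x y, 0 ≤ p x y)
    (B : Set S)
    (f : S → ℝ)
    (hfB : ∀ x ∈ B, f x = 0) :
    ∫⁻ t in Set.Ioi (0:ℝ), ENNReal.ofReal (2 * t) * capacity μ p {x | t < |f x|} B
      ≤ 4 * dirichletForm μ p f := by
  calc _ ≤ ∫⁻ t in Ioi 0, ENNReal.ofReal (2 * t) *
        dirichletForm μ p (fun x => min 1 (f x ^ 2 / t ^ 2)) :=
        setLIntegral_mono' measurableSet_Ioi fun t ht => by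
          gcongr
          exact capacity_le_dirichletForm (fun x hx => min_one_sq_div_sq_eq_one ht (le_of_lt hx))
            (fun x hx => by simp [hfB x hx]) fun x => ⟨by positivity, min_le_left _ _⟩
    _ ≤ 4 * dirichletForm μ p f :=
        lintegral_mul_dirichletForm_le hμ hp (by fun_prop) (fun x => by fun_prop) f 4
          fun x y => lintegral_ofReal_two_mul_mul_sq_sub_min_one_sq_div_sq_le (f x) (f y)

/-- Capacitary inequality: `∫₀^∞ 2t · cap(A_t, B) dt ≤ 4 E(f)` for `f` vanishing on `B`,
where `A_t = {x : |f(x)| > t}`. -/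
theorem capacitary_inequality {S : Type*} [Countable S]
    (μ : S → ℝ) (p : S → S → ℝ)
    (hμ : ∀ x, 0 ≤ μ x) (hμ1 : ∑' x, μ x = 1)
    (hp : ∀ x y, 0 ≤ p x y)
    (hdb : ∀ x y, μ x * p x y = μ y * p y x)
    (B : Set S) (hB : B.Nonempty)
    (f : S → ℝ) (hf2 : Summable (fun x => μ x * f x ^ 2))
    (hfB : ∀ x ∈ B, f x = 0) :
    ∫⁻ t in Set.Ioi (0:ℝ), ENNReal.ofReal (2 * t) * capacity μ p {x | t < |f x|} B
      ≤ 4 * dirichletForm μ p f :=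
  capacitary_inequality_general μ p hμ hp B f hfB
end

section
/- For the indicator function of a set A, the K-Orlicz norm satisfies ‖1_A‖_{Φ,μ,K} = μ[A] · Ψ⁻¹(K/μ[A]), where Ψ⁻¹(t) = inf{s ∈ [0,∞] : Ψ(s) > t}. -/
open scoped ENNReal
open Filter

/-- A Young function: convex on `[0,∞)`, vanishing at `0` (including in the limit),
and tending to `∞` at `∞`. Values are taken in `[0,∞]`. -/
def IsYoung (Φ : ℝ → ℝ≥0∞) : Prop :=
  (∀ a ∈ Set.Ici (0:ℝ), ∀ b ∈ Set.Ici (0:ℝ), ∀ t ∈ Set.Icc (0:ℝ) 1,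
      Φ (t * a + (1 - t) * b) ≤ ENNReal.ofReal t * Φ a + ENNReal.ofReal (1 - t) * Φ b)
  ∧ Φ 0 = 0
  ∧ Filter.Tendsto Φ (nhdsWithin 0 (Set.Ioi 0)) (nhds 0)
  ∧ Filter.Tendsto Φ Filter.atTop Filter.atTop

/-- The Legendre–Fenchel dual `Ψ(r) = sup_{s ≥ 0} (s r − Φ(s))`. -/
noncomputable def legendreDual (Φ : ℝ → ℝ≥0∞) (r : ℝ) : ℝ≥0∞ :=
  ⨆ s : Set.Ici (0:ℝ), ENNReal.ofReal (s.1 * r) - Φ s.1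

/-- The pseudo-inverse `Ψ⁻¹(t) = inf{s ∈ [0,∞] : Ψ(s) > t}`. -/
noncomputable def pseudoInv (Ψ : ℝ → ℝ≥0∞) (t : ℝ≥0∞) : ℝ≥0∞ :=
  sInf ((fun s : ℝ => ENNReal.ofReal s) '' {s : ℝ | 0 ≤ s ∧ t < Ψ s})

/-- The `K`-Orlicz norm `‖f‖_{Φ,μ,K} = sup{ E_μ[|f| g] : g ≥ 0, E_μ[Ψ(g)] ≤ K }`,
written in terms of the dual function `Ψ`. -/
noncomputable def orliczNorm {S : Type*} (μ : S → ℝ) (Ψ : ℝ → ℝ≥0∞) (K : ℝ≥0∞)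
    (f : S → ℝ) : ℝ≥0∞ :=
  ⨆ g : {g : S → ℝ // (∀ x, 0 ≤ g x) ∧ ∑' x, ENNReal.ofReal (μ x) * Ψ (g x) ≤ K},
    ∑' x, ENNReal.ofReal (μ x * |f x| * g.1 x)

/-- The measure of a set `A`, `μ[A] = ∑_{x ∈ A} μ(x)`. -/
noncomputable def measOf {S : Type*} (μ : S → ℝ) (A : Set S) : ℝ≥0∞ :=
  ∑' x : A, ENNReal.ofReal (μ x)



/-! Upper bound: for an admissible `g`, integrating Young's inequality `r g ≤ Ψ(g) + Φ(r)` over `A`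
gives `r V ≤ K + μ[A] Φ(r)` for every `r ≥ 0`, where `V = E_μ[g; A]`; taking the supremum over `r`
this says `Ψ(s) ≤ K / μ[A]` whenever `μ[A] s ≤ V`, so `V ≤ μ[A] Ψ⁻¹(K / μ[A])`.
Lower bound: `Ψ(0) = 0`, so `t 1_A` is admissible as soon as `μ[A] Ψ(t) ≤ K`, and it
achieves `μ[A] t`; the supremum of these `t` is `Ψ⁻¹(K / μ[A])`. -/

open Set

lemma ofReal_mul_le_legendreDual_add (Φ : ℝ → ℝ≥0∞) {r : ℝ} (hr : 0 ≤ r) (x : ℝ) :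
    ENNReal.ofReal (r * x) ≤ legendreDual Φ x + Φ r :=
  tsub_le_iff_right.mp (le_iSup_of_le ⟨r, hr⟩ le_rfl)

lemma legendreDual_zero (Φ : ℝ → ℝ≥0∞) : legendreDual Φ 0 = 0 :=
  le_antisymm (iSup_le fun s => by simp) (zero_le)

lemma mul_legendreDual_le {Φ : ℝ → ℝ≥0∞} {m V K : ℝ≥0∞} (hm : m ≠ ∞)
    (hV : ∀ r, 0 ≤ r → ENNReal.ofReal r * V ≤ K + m * Φ r) {s : ℝ}
    (hs : m * ENNReal.ofReal s ≤ V) : m * legendreDual Φ s ≤ K := by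
  rw [legendreDual, ENNReal.mul_iSup]
  refine iSup_le fun ⟨r, hr⟩ => ?_
  rw [ENNReal.mul_sub fun _ _ => hm, tsub_le_iff_right]
  calc m * ENNReal.ofReal (r * s) = ENNReal.ofReal r * (m * ENNReal.ofReal s) := by
        rw [ENNReal.ofReal_mul hr]
        ring
    _ ≤ ENNReal.ofReal r * V := by gcongr
    _ ≤ K + m * Φ r := hV r hr

lemma le_pseudoInv {Ψ : ℝ → ℝ≥0∞} {u b : ℝ≥0∞}
    (h : ∀ s, 0 ≤ s → u < Ψ s → b ≤ ENNReal.ofReal s) : b ≤ pseudoInv Ψ u :=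
  le_sInf <| by
    rintro _ ⟨s, ⟨hs, hΨs⟩, rfl⟩
    exact h s hs hΨs

lemma pseudoInv_le {Ψ : ℝ → ℝ≥0∞} {u b : ℝ≥0∞}
    (h : ∀ t, 0 ≤ t → Ψ t ≤ u → ENNReal.ofReal t ≤ b) : pseudoInv Ψ u ≤ b := by
  by_contra! hb
  obtain ⟨b', hbb', hb'⟩ := exists_between hb
  have hb'eq : ENNReal.ofReal b'.toReal = b' := ENNReal.ofReal_toReal hb'.ne_top
  by_cases hΨ : u < Ψ b'.toReal
  · have : pseudoInv Ψ u ≤ b' := hb'eq ▸ sInf_le ⟨_, ⟨ENNReal.toReal_nonneg, hΨ⟩, rfl⟩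
    exact hb'.not_ge this
  · have := h _ ENNReal.toReal_nonneg (not_lt.mp hΨ)
    rw [hb'eq] at this
    exact hbb'.not_ge this

lemma tsum_mul_ofReal_le_mul_pseudoInv {ι : Type*} (w : ι → ℝ≥0∞) (hw : ∑' i, w i ≠ ∞)
    (Φ : ℝ → ℝ≥0∞) (K : ℝ≥0∞) (g : ι → ℝ)
    (hgK : ∑' i, w i * legendreDual Φ (g i) ≤ K) :
    ∑' i, w i * ENNReal.ofReal (g i)
      ≤ (∑' i, w i) * pseudoInv (legendreDual Φ) (K / ∑' i, w i) := by
  set m := ∑' i, w i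
  set V := ∑' i, w i * ENNReal.ofReal (g i)
  rcases eq_or_ne m 0 with hm0 | hm0
  · have hw0 : ∀ i, w i = 0 := ENNReal.tsum_eq_zero.mp hm0
    simp [V, hw0]
  have young : ∀ r, 0 ≤ r → ENNReal.ofReal r * V ≤ K + m * Φ r := fun r hr =>
    calc ENNReal.ofReal r * V = ∑' i, w i * ENNReal.ofReal (r * g i) := by
          rw [← ENNReal.tsum_mul_left]
          refine tsum_congr fun i => ?_
          rw [ENNReal.ofReal_mul hr]
          ring
      _ ≤ ∑' i, w i * (legendreDual Φ (g i) + Φ r) := by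
          gcongr
          exact ofReal_mul_le_legendreDual_add Φ hr _
      _ = ∑' i, w i * legendreDual Φ (g i) + m * Φ r := by
          simp only [mul_add, ENNReal.tsum_add, ENNReal.tsum_mul_right, m]
      _ ≤ K + m * Φ r := by gcongr
  rw [mul_comm, ← ENNReal.div_le_iff hm0 hw]
  refine le_pseudoInv fun s _ hΨs => ?_
  by_contra! hlt
  rw [ENNReal.lt_div_iff_mul_lt (.inl hm0) (.inl hw), mul_comm] at hlt
  refine hΨs.not_ge ((ENNReal.le_div_iff_mul_le (.inl hm0) (.inl hw)).mpr ?_)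
  exact mul_comm m _ ▸ mul_legendreDual_le hw young hlt.le

section

variable {S : Type*} {μ : S → ℝ}

lemma measOf_le_one (hμ : ∀ x, 0 ≤ μ x) (hμ1 : ∑' x, μ x = 1) (A : Set S) :
    measOf μ A ≤ 1 := by
  have hsum : Summable μ := by
    by_contra h
    simp [tsum_eq_zero_of_not_summable h] at hμ1
  calc measOf μ A ≤ ∑' x, ENNReal.ofReal (μ x) :=
        ENNReal.tsum_comp_le_tsum_of_injective Subtype.val_injective _
    _ = 1 := by rw [← ENNReal.ofReal_tsum_of_nonneg hμ hsum, hμ1, ENNReal.ofReal_one]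

lemma tsum_ofReal_mul_abs_indicator_one_mul (hμ : ∀ x, 0 ≤ μ x) (A : Set S) (g : S → ℝ) :
    ∑' x, ENNReal.ofReal (μ x * |A.indicator (fun _ => (1:ℝ)) x| * g x)
      = ∑' x : A, ENNReal.ofReal (μ x) * ENNReal.ofReal (g x) := by
  rw [tsum_subtype A fun x => ENNReal.ofReal (μ x) * ENNReal.ofReal (g x)]
  refine tsum_congr fun x => ?_
  by_cases hx : x ∈ A <;> simp [hx, ENNReal.ofReal_mul (hμ x)]

lemma mul_ofReal_le_orliczNorm_indicator (hμ : ∀ x, 0 ≤ μ x) (Φ : ℝ → ℝ≥0∞) (K : ℝ≥0∞)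
    (A : Set S) {t : ℝ} (ht : 0 ≤ t) (hΨt : measOf μ A * legendreDual Φ t ≤ K) :
    measOf μ A * ENNReal.ofReal t
      ≤ orliczNorm μ (legendreDual Φ) K (A.indicator fun _ => (1:ℝ)) := by
  have hg0 : ∀ x, 0 ≤ A.indicator (fun _ => t) x := fun x => indicator_nonneg (fun _ _ => ht) x
  have hgK : ∑' x, ENNReal.ofReal (μ x) * legendreDual Φ (A.indicator (fun _ => t) x) ≤ K := by
    have : ∀ x, ENNReal.ofReal (μ x) * legendreDual Φ (A.indicator (fun _ => t) x)
        = A.indicator (fun y => ENNReal.ofReal (μ y) * legendreDual Φ t) x := by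
      intro x
      by_cases hx : x ∈ A <;> simp [hx, legendreDual_zero]
    rwa [tsum_congr this, ← tsum_subtype, ENNReal.tsum_mul_right]
  refine le_of_eq_of_le ?_ (le_iSup _ ⟨A.indicator (fun _ => t), hg0, hgK⟩)
  rw [tsum_ofReal_mul_abs_indicator_one_mul hμ, measOf, ← ENNReal.tsum_mul_right]
  exact tsum_congr fun x => by simp [x.2]

end

theorem orliczNorm_indicator_general {S : Type*}
    (μ : S → ℝ) (hμ : ∀ x, 0 ≤ μ x) (hμ1 : ∑' x, μ x = 1)
    (Φ Ψ : ℝ → ℝ≥0∞) (hΨ : Ψ = legendreDual Φ)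
    (K : ℝ≥0∞) (A : Set S) :
    orliczNorm μ Ψ K (A.indicator fun _ => (1:ℝ))
      = measOf μ A * pseudoInv Ψ (K / measOf μ A) := by
  subst hΨ
  have hmtop : measOf μ A ≠ ∞ := ne_top_of_le_ne_top ENNReal.one_ne_top (measOf_le_one hμ hμ1 A)
  refine le_antisymm (iSup_le fun ⟨g, _, hgK⟩ => ?_) ?_
  · rw [tsum_ofReal_mul_abs_indicator_one_mul hμ]
    refine tsum_mul_ofReal_le_mul_pseudoInv _ hmtop Φ K _ (le_trans ?_ hgK)
    exact ENNReal.tsum_comp_le_tsum_of_injective Subtype.val_injective _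
  rcases eq_or_ne (measOf μ A) 0 with hm0 | hm0
  · simp [hm0]
  rw [mul_comm, ← ENNReal.le_div_iff_mul_le (.inl hm0) (.inl hmtop)]
  refine pseudoInv_le fun t ht hΨt => ?_
  rw [ENNReal.le_div_iff_mul_le (.inl hm0) (.inl hmtop), mul_comm]
  rw [ENNReal.le_div_iff_mul_le (.inl hm0) (.inl hmtop), mul_comm] at hΨt
  exact mul_ofReal_le_orliczNorm_indicator hμ Φ K A ht hΨt

/-- The `K`-Orlicz norm of an indicator function:
`‖1_A‖_{Φ,μ,K} = μ[A] · Ψ⁻¹(K/μ[A])`. -/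
theorem orliczNorm_indicator {S : Type*} [Countable S]
    (μ : S → ℝ) (hμ : ∀ x, 0 ≤ μ x) (hμ1 : ∑' x, μ x = 1)
    (Φ Ψ : ℝ → ℝ≥0∞) (hΦ : IsYoung Φ) (hΨ : Ψ = legendreDual Φ)
    (K : ℝ≥0∞) (hK : 0 < K) (A : Set S) :
    orliczNorm μ Ψ K (A.indicator fun _ => (1:ℝ))
      = measOf μ A * pseudoInv Ψ (K / measOf μ A) :=
  orliczNorm_indicator_general μ hμ hμ1 Φ Ψ hΨ K A
end

section
/- The elementary inequality ln(1/x) / ln(1 + e²/x) ≥ (1 − x)/ln(1 + e²) holds for all x ∈ (0,1]. -/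
/-! With `t = log (1/x)` and `L = log (1 + e²) ≥ 2`, the denominator `log (1 + e²/x)` is at most
`L + t`, so it suffices that `(1 - x)(L + t) ≤ t L`. Since `L ≥ 2` and `t ≥ 1 - x`, this reduces to
the classical bound `2(1 - x)/(1 + x) ≤ log (1/x)`. -/

open Real

lemma two_mul_one_sub_le_log_one_div_mul {x : ℝ} (hx0 : 0 < x) (hx1 : x ≤ 1) :
    2 * (1 - x) ≤ log (1 / x) * (1 + x) := by
  have hy : 0 ≤ 1 / x - 1 := by rw [sub_nonneg, le_div_iff₀ hx0]; linarith
  have h := le_log_one_add_of_nonneg hy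
  rw [add_sub_cancel, div_le_iff₀ (by positivity)] at h
  field_simp at h
  linarith

lemma log_one_add_div_le {a x : ℝ} (ha : 0 ≤ a) (hx0 : 0 < x) (hx1 : x ≤ 1) :
    log (1 + a / x) ≤ log (1 + a) + log (1 / x) := by
  rw [← log_mul (by positivity) (by positivity), mul_one_div]
  refine log_le_log (by positivity) ?_
  rw [add_div]
  gcongr
  exact one_le_one_div hx0 hx1

lemma two_le_log_one_add_exp_two : 2 ≤ log (1 + exp 2) := by
  calc (2 : ℝ) = log (exp 2) := (log_exp 2).symm
    _ ≤ log (1 + exp 2) := log_le_log (exp_pos 2) (by linarith)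

/-- The elementary inequality `ln(1/x)/ln(1+e²/x) ≥ (1−x)/ln(1+e²)` for `x ∈ (0,1]`. -/
theorem log_ratio_ineq (x : ℝ) (hx0 : 0 < x) (hx1 : x ≤ 1) :
    (1 - x) / Real.log (1 + Real.exp 2)
      ≤ Real.log (1 / x) / Real.log (1 + Real.exp 2 / x) := by
  set L := log (1 + exp 2)
  set t := log (1 / x)
  have hL : 2 ≤ L := two_le_log_one_add_exp_two
  have hkey : 2 * (1 - x) ≤ t * (1 + x) := two_mul_one_sub_le_log_one_div_mul hx0 hx1
  have ht : 0 ≤ t := log_nonneg (one_le_one_div hx0 hx1)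
  have ht1x : 1 - x ≤ t := by nlinarith
  have hA : log (1 + exp 2 / x) ≤ L + t := log_one_add_div_le (exp_pos 2).le hx0 hx1
  rw [div_le_div_iff₀ (by linarith) (log_pos (lt_add_of_pos_right 1 (by positivity)))]
  calc (1 - x) * log (1 + exp 2 / x) ≤ (1 - x) * (L + t) :=
        mul_le_mul_of_nonneg_left hA (by linarith)
    _ ≤ t * L := by nlinarith [mul_nonneg (sub_nonneg.2 hL) (sub_nonneg.2 ht1x)]
end
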